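/- Behavior under cyclic permutation with orientation reversal (Proposition, part 3): let G be a Gauss diagram on n strings and I = {i_1 < i_2 < … < i_r} ⊆ {1,…,n}. Let G^σ be the Gauss diagram obtained from G by the cyclic permutation σ = (i_1 i_2 … i_r) of strings (string i_k of G^σ is string i_{k+1} of G for k = 1,…,r−1, and string i_r of G^σ is string i_1 of G; all other strings are unchanged), followed by reversing the orientation of string i_r of G^σ. Then Z_{I∖{i_r}, i_r}(G^σ) = Z_{I∖{i_1}, i_1}(G). -/
import Mathlib


/-!
Combinatorial Gauss diagrams on `n` strings and the tree invariants `Z I j`.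

A Gauss diagram is encoded by a finite set of arrows; each arrow records the
string (an element of `Fin n`) and the position (a rational number, increasing
in the direction of the orientation of the string) of its tail and of its head,
together with a sign `±1`.  Only the induced combinatorial data (linear order of
the endpoints along each string, the tail/head pairing and the signs) is ever
used by the definitions below.

The tree invariant `Z I j G = ∑_{A ∈ 𝒜_{I,j}} sign(A) ⟨A, G⟩` is computed as a
signed count over all subsets `S` of the arrows of `G` that form a planar tree
diagram with leaves on `I` and trunk on `j`: each pair `(A, φ)` of a planar tree
diagram `A ∈ 𝒜_{I,j}` together with an embedding `φ : A → G` corresponds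
bijectively to the subset `S = Im φ` of the arrows of `G`, which is itself a
planar tree diagram with leaves on `I` and trunk on `j`; the contribution of the
pair to the sum is `sign(A) · sign(φ) = (-1)^{#right-pointing arrows of S} · ∏_{a ∈ S} sign(a)`.
-/

open scoped Classical

/-- An arrow of a Gauss diagram on `n` strings: a tail endpoint, a head
endpoint (each given by the string it lies on and its position along that
string) and a sign. -/
structure GArrow (n : ℕ) where
  tailStr : Fin n
  tailPos : ℚ
  headStr : Fin n
  headPos : ℚ
  sign : ℤ
deriving DecidableEq

namespace GArrow

/-- The two endpoints of an arrow: `false` is the tail, `true` is the head. -/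
def ep {n : ℕ} (a : GArrow n) : Bool → Fin n × ℚ
  | false => (a.tailStr, a.tailPos)
  | true => (a.headStr, a.headPos)

end GArrow

/-- A Gauss diagram on `n` strings: a finite set of signed arrows with all
endpoints pairwise distinct, and all signs equal to `±1`. -/
structure GaussDiagram (n : ℕ) where
  arrows : Finset (GArrow n)
  sign_pm : ∀ a ∈ arrows, a.sign = 1 ∨ a.sign = -1
  endpoints_distinct : ∀ a ∈ arrows, ∀ b ∈ arrows, ∀ s t : Bool,
    a.ep s = b.ep t → a = b ∧ s = t

/-- `S` is a tree diagram with leaves on `I` and trunk on `j`: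
* the head and the tail of every arrow lie on different strings;
* for each `i ∈ I` there is exactly one arrow tail on string `i`, and there are
  no arrow tails on strings outside `I`;
* every arrow head lies on a string of `I ∪ {j}`;
* on each string `i ∈ I` all arrow heads precede the unique arrow tail. -/
def IsTreeDiagram {n : ℕ} (I : Finset (Fin n)) (j : Fin n)
    (S : Finset (GArrow n)) : Prop :=
  (∀ a ∈ S, a.tailStr ≠ a.headStr) ∧
  (∀ i ∈ I, ∃! a, a ∈ S ∧ a.tailStr = i) ∧
  (∀ a ∈ S, a.tailStr ∈ I) ∧
  (∀ a ∈ S, a.headStr ∈ I ∨ a.headStr = j) ∧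
  (∀ a ∈ S, ∀ b ∈ S, a.headStr = b.tailStr → a.headPos < b.tailPos)

/-- `ParentRel S s t` : string `s` is the parent of string `t` in the rooted
tree determined by the tree diagram `S`, i.e. the (unique) arrow with tail on
`t` has its head on `s`. -/
def ParentRel {n : ℕ} (S : Finset (GArrow n)) (s t : Fin n) : Prop :=
  ∃ a ∈ S, a.tailStr = t ∧ a.headStr = s

/-- `Descends S s k` : string `k` belongs to the subtree of string `s` (it is
`s` itself or an iterated child of `s`). -/
def Descends {n : ℕ} (S : Finset (GArrow n)) : Fin n → Fin n → Prop :=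
  Relation.ReflTransGen (ParentRel S)

/-- `S` is a *planar* tree diagram with leaves on `I` and trunk on `j`: the
rooted tree `T_S` determined by `S` can be drawn in the plane so that the
clockwise order of its leaves, starting from the root on string `j`, is the
order of the string numbers.  Combinatorially this says that:
* the parent relation makes the strings carrying the arrows into a tree rooted
  at `j` (every leaf string is an iterated child of `j`);
* the whole subtree hanging from an arrow lies on the same side of the string
  carrying the head of that arrow as its tail does;
* two subtrees hanging on the same side of a common string are ordered, along
  that string, compatibly with the order of the strings: for two arrow heads on
  the same string, with both tails on the left, the subtree attached closer to
  the beginning of the string is the one carrying the larger string numbers,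
  while for two tails on the right it is the one carrying the smaller string
  numbers. -/
def IsPlanarTreeDiagram {n : ℕ} (I : Finset (Fin n)) (j : Fin n)
    (S : Finset (GArrow n)) : Prop :=
  IsTreeDiagram I j S ∧
  (∀ i ∈ I, Relation.TransGen (ParentRel S) j i) ∧
  (∀ a ∈ S, ∀ k : Fin n, Descends S a.tailStr k →
    (a.tailStr < a.headStr ↔ k < a.headStr)) ∧
  (∀ a ∈ S, ∀ b ∈ S, a.headStr = b.headStr → a.headPos < b.headPos →
    ∀ k k' : Fin n, Descends S a.tailStr k → Descends S b.tailStr k' →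
      ((a.tailStr < a.headStr → b.tailStr < b.headStr → k' < k) ∧
       (a.headStr < a.tailStr → b.headStr < b.tailStr → k < k')))

/-- The sign `(-1)^q` of an (embedded) arrow diagram, where `q` is the number
of right-pointing arrows (tail on a string of smaller number than the head). -/
noncomputable def treeSign {n : ℕ} (S : Finset (GArrow n)) : ℤ :=
  (-1) ^ (S.filter fun a => a.tailStr < a.headStr).card

/-- The tree invariant `Z_{I,j}(G) = ∑_{A ∈ 𝒜_{I,j}} sign(A)·⟨A,G⟩`, computed
as the signed count of embedded planar tree diagrams with leaves on `I` and
trunk on `j` inside `G`.  In particular `Z ∅ j G = 1` (only `S = ∅`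
contributes). -/
noncomputable def Z {n : ℕ} (I : Finset (Fin n)) (j : Fin n)
    (G : GaussDiagram n) : ℤ :=
  ∑ S ∈ G.arrows.powerset,
    if IsPlanarTreeDiagram I j S then treeSign S * ∏ a ∈ S, a.sign else 0

/-- Reversing the orientation of string `i`: the linear order of the endpoints
on string `i` is reversed (positions are negated) and the sign of every arrow
with exactly one endpoint on string `i` is multiplied by `-1`. -/
def reverseArrow {n : ℕ} (i : Fin n) (a : GArrow n) : GArrow n where
  tailStr := a.tailStr
  tailPos := if a.tailStr = i then -a.tailPos else a.tailPos
  headStr := a.headStr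
  headPos := if a.headStr = i then -a.headPos else a.headPos
  sign := if (a.tailStr = i ∧ a.headStr ≠ i) ∨ (a.tailStr ≠ i ∧ a.headStr = i)
    then -a.sign else a.sign

section Aux

variable {n : ℕ}

/-- The arrow map: relabel strings by `ρ`, then reverse string `M`. -/
def shiftA (ρ : Fin n → Fin n) (M : Fin n) (a : GArrow n) : GArrow n :=
  reverseArrow M ⟨ρ a.tailStr, a.tailPos, ρ a.headStr, a.headPos, a.sign⟩

@[simp] lemma shiftA_tailStr (ρ : Fin n → Fin n) (M : Fin n) (a : GArrow n) :
    (shiftA ρ M a).tailStr = ρ a.tailStr := rfl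

@[simp] lemma shiftA_headStr (ρ : Fin n → Fin n) (M : Fin n) (a : GArrow n) :
    (shiftA ρ M a).headStr = ρ a.headStr := rfl

lemma shiftA_tailPos (ρ : Fin n → Fin n) (M : Fin n) (a : GArrow n) :
    (shiftA ρ M a).tailPos = if ρ a.tailStr = M then -a.tailPos else a.tailPos := by simp [shiftA, reverseArrow]

lemma shiftA_headPos (ρ : Fin n → Fin n) (M : Fin n) (a : GArrow n) :
    (shiftA ρ M a).headPos = if ρ a.headStr = M then -a.headPos else a.headPos := by simp [shiftA, reverseArrow]

lemma shiftA_sign (ρ : Fin n → Fin n) (M : Fin n) (a : GArrow n) :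
    (shiftA ρ M a).sign =
      if (ρ a.tailStr = M ∧ ρ a.headStr ≠ M) ∨ (ρ a.tailStr ≠ M ∧ ρ a.headStr = M)
      then -a.sign else a.sign := by simp [shiftA, reverseArrow]

lemma shiftA_injective {ρ : Fin n → Fin n} (hρ : Function.Injective ρ) (M : Fin n) :
    Function.Injective (shiftA ρ M) := by
  intro a b h
  have ht : a.tailStr = b.tailStr := hρ (congrArg GArrow.tailStr h)
  have hh : a.headStr = b.headStr := hρ (congrArg GArrow.headStr h)
  have htp := congrArg GArrow.tailPos h
  have hhp := congrArg GArrow.headPos h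
  have hs := congrArg GArrow.sign h
  rw [shiftA_tailPos, shiftA_tailPos, ht] at htp
  rw [shiftA_headPos, shiftA_headPos, hh] at hhp
  rw [shiftA_sign, shiftA_sign, ht, hh] at hs
  split_ifs at htp hhp hs with h1 h2 h3 <;>
    cases a <;> cases b <;> simp_all

end Aux
section Rho

variable {n : ℕ} {I : Finset (Fin n)} {ρ : Fin n → Fin n} {m M : Fin n}

lemma rho_mem (hMI : M ∈ I) (hmin : ρ m = M)
    (hpred : ∀ s ∈ I, m < s → ρ s ∈ I ∧ ρ s < s ∧ ∀ x ∈ I, x < s → x ≤ ρ s)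
    (hmle : ∀ x ∈ I, m ≤ x) {s : Fin n} (hs : s ∈ I) : ρ s ∈ I := by
  rcases eq_or_ne s m with rfl | h
  · rw [hmin]; exact hMI
  · exact (hpred s hs (lt_of_le_of_ne (hmle s hs) (Ne.symm h))).1

lemma rho_lt_max
    (hpred : ∀ s ∈ I, m < s → ρ s ∈ I ∧ ρ s < s ∧ ∀ x ∈ I, x < s → x ≤ ρ s)
    (hleM : ∀ x ∈ I, x ≤ M) {s : Fin n} (hs : s ∈ I) (hms : m < s) : ρ s < M :=
  lt_of_lt_of_le (hpred s hs hms).2.1 (hleM s hs)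

lemma rho_eq_max_iff (hMI : M ∈ I) (hmin : ρ m = M)
    (hout : ∀ s, s ∉ I → ρ s = s)
    (hpred : ∀ s ∈ I, m < s → ρ s ∈ I ∧ ρ s < s ∧ ∀ x ∈ I, x < s → x ≤ ρ s)
    (hmle : ∀ x ∈ I, m ≤ x) (hleM : ∀ x ∈ I, x ≤ M) {s : Fin n} :
    ρ s = M ↔ s = m := by
  constructor
  · intro h
    by_cases hs : s ∈ I
    · rcases eq_or_ne s m with rfl | hne
      · rfl
      · exact absurd h (ne_of_lt (rho_lt_max hpred hleM hs
          (lt_of_le_of_ne (hmle s hs) (Ne.symm hne))))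
    · rw [hout s hs] at h; exact absurd (h ▸ hMI) hs
  · rintro rfl; exact hmin

lemma rho_strictMono
    (hpred : ∀ s ∈ I, m < s → ρ s ∈ I ∧ ρ s < s ∧ ∀ x ∈ I, x < s → x ≤ ρ s)
    {s t : Fin n} (hs : s ∈ I) (ht : t ∈ I) (hms : m < s) (hmt : m < t)
    (hst : s < t) : ρ s < ρ t := by
  obtain ⟨hs1, hs2, _⟩ := hpred s hs hms
  obtain ⟨ht1, ht2, ht3⟩ := hpred t ht hmt
  have hle : ρ s ≤ ρ t := ht3 (ρ s) hs1 (lt_trans hs2 hst)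
  rcases lt_or_eq_of_le hle with h | h
  · exact h
  · exfalso
    have : s ≤ ρ t := ht3 s hs hst
    rw [← h] at this
    exact absurd hs2 (not_lt_of_ge this)

lemma rho_lt_iff
    (hpred : ∀ s ∈ I, m < s → ρ s ∈ I ∧ ρ s < s ∧ ∀ x ∈ I, x < s → x ≤ ρ s)
    {s t : Fin n} (hs : s ∈ I) (ht : t ∈ I) (hms : m < s) (hmt : m < t) :
    s < t ↔ ρ s < ρ t := by
  constructor
  · exact rho_strictMono hpred hs ht hms hmt
  · intro h
    by_contra hc
    rcases eq_or_lt_of_le (not_lt.mp hc) with h' | h'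
    · rw [h'] at h; exact lt_irrefl _ h
    · exact absurd (rho_strictMono hpred ht hs hmt hms h') (not_lt_of_gt h)

lemma rho_injective (hMI : M ∈ I) (hmin : ρ m = M)
    (hout : ∀ s, s ∉ I → ρ s = s)
    (hpred : ∀ s ∈ I, m < s → ρ s ∈ I ∧ ρ s < s ∧ ∀ x ∈ I, x < s → x ≤ ρ s)
    (hmle : ∀ x ∈ I, m ≤ x) (hleM : ∀ x ∈ I, x ≤ M) :
    Function.Injective ρ := by
  intro s t h
  by_cases hs : s ∈ I <;> by_cases ht : t ∈ I
  · by_cases hsm : s = m <;> by_cases htm : t = m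
    · rw [hsm, htm]
    · exfalso
      have hmt : m < t := lt_of_le_of_ne (hmle t ht) (Ne.symm htm)
      rw [hsm, hmin] at h
      exact absurd h.symm (ne_of_lt (rho_lt_max hpred hleM ht hmt))
    · exfalso
      have hms : m < s := lt_of_le_of_ne (hmle s hs) (Ne.symm hsm)
      rw [htm, hmin] at h
      exact absurd h (ne_of_lt (rho_lt_max hpred hleM hs hms))
    · have hms : m < s := lt_of_le_of_ne (hmle s hs) (Ne.symm hsm)
      have hmt : m < t := lt_of_le_of_ne (hmle t ht) (Ne.symm htm)
      rcases lt_trichotomy s t with h' | h' | h'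
      · exact absurd h (ne_of_lt (rho_strictMono hpred hs ht hms hmt h'))
      · exact h'
      · exact absurd h.symm (ne_of_lt (rho_strictMono hpred ht hs hmt hms h'))
  · exfalso
    have := rho_mem hMI hmin hpred hmle hs
    rw [h, hout t ht] at this; exact ht this
  · exfalso
    have := rho_mem hMI hmin hpred hmle ht
    rw [← h, hout s hs] at this; exact hs this
  · rw [hout s hs, hout t ht] at h; exact h

lemma mem_of_rho_mem (hout : ∀ s, s ∉ I → ρ s = s) {s : Fin n}
    (h : ρ s ∈ I) : s ∈ I := by
  by_contra hs; rw [hout s hs] at h; exact hs h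

lemma rho_surjOn (hMI : M ∈ I) (hmin : ρ m = M)
    (hout : ∀ s, s ∉ I → ρ s = s)
    (hpred : ∀ s ∈ I, m < s → ρ s ∈ I ∧ ρ s < s ∧ ∀ x ∈ I, x < s → x ≤ ρ s)
    (hmle : ∀ x ∈ I, m ≤ x) (hleM : ∀ x ∈ I, x ≤ M) {i : Fin n} (hi : i ∈ I) :
    ∃ s ∈ I, ρ s = i := by
  have hsub : I.image ρ ⊆ I := by
    intro x hx
    obtain ⟨s, hs, rfl⟩ := Finset.mem_image.1 hx
    exact rho_mem hMI hmin hpred hmle hs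
  have hcard : I.card ≤ (I.image ρ).card := by
    rw [Finset.card_image_of_injective _ (rho_injective hMI hmin hout hpred hmle hleM)]
  have : I.image ρ = I := Finset.eq_of_subset_of_card_le hsub hcard
  rw [← this] at hi
  obtain ⟨s, hs, h⟩ := Finset.mem_image.1 hi
  exact ⟨s, hs, h⟩

end Rho
section Rel

variable {n : ℕ} {ρ : Fin n → Fin n} {M : Fin n} {S : Finset (GArrow n)}

lemma parent_map {s t : Fin n} (h : ParentRel S s t) :
    ParentRel (S.image (shiftA ρ M)) (ρ s) (ρ t) := by
  obtain ⟨a, ha, h1, h2⟩ := h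
  exact ⟨shiftA ρ M a, Finset.mem_image_of_mem _ ha, by rw [shiftA_tailStr, h1],
    by rw [shiftA_headStr, h2]⟩

lemma parent_unmap {x y : Fin n} (h : ParentRel (S.image (shiftA ρ M)) x y) :
    ∃ s t, x = ρ s ∧ y = ρ t ∧ ParentRel S s t := by
  obtain ⟨a', ha', h1, h2⟩ := h
  obtain ⟨a, ha, rfl⟩ := Finset.mem_image.1 ha'
  exact ⟨a.headStr, a.tailStr, h2.symm, h1.symm, a, ha, rfl, rfl⟩

lemma descends_map {s k : Fin n} (h : Descends S s k) :
    Descends (S.image (shiftA ρ M)) (ρ s) (ρ k) := by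
  induction h with
  | refl => exact Relation.ReflTransGen.refl
  | tail _ h2 ih => exact ih.tail (parent_map h2)

lemma descends_unmap (hρ : Function.Injective ρ) {s : Fin n} {k' : Fin n}
    (h : Descends (S.image (shiftA ρ M)) (ρ s) k') :
    ∃ k, k' = ρ k ∧ Descends S s k := by
  suffices H : ∀ x, Relation.ReflTransGen (ParentRel (S.image (shiftA ρ M))) x k' →
      ∀ s, x = ρ s → ∃ k, k' = ρ k ∧ Descends S s k from H _ h s rfl
  intro x hx
  induction hx using Relation.ReflTransGen.head_induction_on with
  | refl => exact fun s hs => ⟨s, hs, Relation.ReflTransGen.refl⟩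
  | head h' _ ih =>
    intro s hs
    obtain ⟨s₀, t₀, hx0, hy0, hp⟩ := parent_unmap h'
    have hss : s = s₀ := hρ (hs ▸ hx0)
    obtain ⟨k, hk, hd⟩ := ih t₀ hy0
    refine ⟨k, hk, Relation.ReflTransGen.head ?_ hd⟩
    rw [hss]; exact hp

lemma transgen_map {s t : Fin n} (h : Relation.TransGen (ParentRel S) s t) :
    Relation.TransGen (ParentRel (S.image (shiftA ρ M))) (ρ s) (ρ t) := by
  obtain ⟨b, hb, hstep⟩ := Relation.TransGen.tail'_iff.1 h
  exact Relation.TransGen.tail' (descends_map hb) (parent_map hstep)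

lemma transgen_unmap (hρ : Function.Injective ρ) {s t : Fin n}
    (h : Relation.TransGen (ParentRel (S.image (shiftA ρ M))) (ρ s) (ρ t)) :
    Relation.TransGen (ParentRel S) s t := by
  obtain ⟨b, hb, hstep⟩ := Relation.TransGen.tail'_iff.1 h
  obtain ⟨s₀, t₀, hb0, ht0, hp⟩ := parent_unmap hstep
  have htt : t₀ = t := hρ ht0.symm
  obtain ⟨k, hk, hd⟩ := descends_unmap hρ (hb0 ▸ hb : Descends (S.image (shiftA ρ M)) (ρ s) (ρ s₀))
  have hks : k = s₀ := hρ hk.symm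
  exact Relation.TransGen.tail' (hks ▸ hd) (htt ▸ hp)

lemma descends_cases {s k : Fin n} (h : Descends S s k) :
    k = s ∨ ∃ a ∈ S, a.tailStr = k := by
  rcases h.cases_tail with h | ⟨c, _, hp⟩
  · exact Or.inl h
  · obtain ⟨a, ha, h1, _⟩ := hp
    exact Or.inr ⟨a, ha, h1⟩

end Rel

lemma treeSign_eq {n : ℕ} (S : Finset (GArrow n)) :
    treeSign S = ∏ a ∈ S, (if a.tailStr < a.headStr then (-1 : ℤ) else 1) := by
  rw [treeSign, Finset.prod_ite]
  simp
section Planar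

variable {n : ℕ} {I : Finset (Fin n)} {ρ : Fin n → Fin n} {m M : Fin n}

lemma planar_forward (hmI : m ∈ I) (hMI : M ∈ I) (hmin : ρ m = M)
    (hout : ∀ s, s ∉ I → ρ s = s)
    (hpred : ∀ s ∈ I, m < s → ρ s ∈ I ∧ ρ s < s ∧ ∀ x ∈ I, x < s → x ≤ ρ s)
    (hmle : ∀ x ∈ I, m ≤ x) (hleM : ∀ x ∈ I, x ≤ M)
    {S : Finset (GArrow n)} (hP : IsPlanarTreeDiagram (I.erase m) m S) :
    IsPlanarTreeDiagram (I.erase M) M (S.image (shiftA ρ M)) := by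
  have hρ : Function.Injective ρ := rho_injective hMI hmin hout hpred hmle hleM
  obtain ⟨⟨h1, h2, h3, h4, h5⟩, hroot, hside, hord⟩ := hP
  have htI : ∀ a ∈ S, a.tailStr ∈ I ∧ m < a.tailStr := by
    intro a ha
    have h := Finset.mem_erase.1 (h3 a ha)
    exact ⟨h.2, lt_of_le_of_ne (hmle _ h.2) (Ne.symm h.1)⟩
  have hhI : ∀ a ∈ S, a.headStr ∈ I := by
    intro a ha
    rcases h4 a ha with h | h
    · exact (Finset.mem_erase.1 h).2
    · rw [h]; exact hmI
  have hdesc : ∀ a ∈ S, ∀ k, Descends S a.tailStr k → k ∈ I ∧ m < k := by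
    intro a ha k hk
    rcases descends_cases hk with rfl | ⟨b, hb, rfl⟩
    · exact htI a ha
    · exact htI b hb
  have hrneM : ∀ s ∈ I, m < s → ρ s ≠ M :=
    fun s hs hms => ne_of_lt (rho_lt_max hpred hleM hs hms)
  refine ⟨⟨?_, ?_, ?_, ?_, ?_⟩, ?_, ?_, ?_⟩
  · intro a' ha'
    obtain ⟨a, ha, rfl⟩ := Finset.mem_image.1 ha'
    simp only [shiftA_tailStr, shiftA_headStr]
    exact fun h => h1 a ha (hρ h)
  · intro i hi
    rw [Finset.mem_erase] at hi
    obtain ⟨s, hsI, rfl⟩ := rho_surjOn hMI hmin hout hpred hmle hleM hi.2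
    have hsm : s ≠ m := by rintro rfl; exact hi.1 hmin
    obtain ⟨a, ⟨haS, hat⟩, huniq⟩ := h2 s (Finset.mem_erase.2 ⟨hsm, hsI⟩)
    refine ⟨shiftA ρ M a, ⟨Finset.mem_image_of_mem _ haS, by rw [shiftA_tailStr, hat]⟩, ?_⟩
    rintro b' ⟨hb', hbt⟩
    obtain ⟨b, hb, rfl⟩ := Finset.mem_image.1 hb'
    rw [shiftA_tailStr] at hbt
    rw [huniq b ⟨hb, hρ hbt⟩]
  · intro a' ha'
    obtain ⟨a, ha, rfl⟩ := Finset.mem_image.1 ha'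
    rw [shiftA_tailStr, Finset.mem_erase]
    obtain ⟨htI', hmt⟩ := htI a ha
    exact ⟨hrneM _ htI' hmt, rho_mem hMI hmin hpred hmle htI'⟩
  · intro a' ha'
    obtain ⟨a, ha, rfl⟩ := Finset.mem_image.1 ha'
    rw [shiftA_headStr]
    by_cases h : ρ a.headStr = M
    · exact Or.inr h
    · exact Or.inl (Finset.mem_erase.2 ⟨h, rho_mem hMI hmin hpred hmle (hhI a ha)⟩)
  · intro a' ha' b' hb' hab
    obtain ⟨a, ha, rfl⟩ := Finset.mem_image.1 ha'
    obtain ⟨b, hb, rfl⟩ := Finset.mem_image.1 hb'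
    rw [shiftA_headStr, shiftA_tailStr] at hab
    have heq : a.headStr = b.tailStr := hρ hab
    obtain ⟨htbI, hmtb⟩ := htI b hb
    have h1' : ρ a.headStr ≠ M := by rw [heq]; exact hrneM _ htbI hmtb
    have h2' : ρ b.tailStr ≠ M := hrneM _ htbI hmtb
    show (shiftA ρ M a).headPos < (shiftA ρ M b).tailPos
    rw [shiftA_headPos, shiftA_tailPos, if_neg h1', if_neg h2']
    exact h5 a ha b hb heq
  · intro i hi
    rw [Finset.mem_erase] at hi
    obtain ⟨s, hsI, rfl⟩ := rho_surjOn hMI hmin hout hpred hmle hleM hi.2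
    have hsm : s ≠ m := by rintro rfl; exact hi.1 hmin
    have h := transgen_map (ρ := ρ) (M := M) (hroot s (Finset.mem_erase.2 ⟨hsm, hsI⟩))
    rwa [hmin] at h
  · intro a' ha' k' hk'
    obtain ⟨a, ha, rfl⟩ := Finset.mem_image.1 ha'
    simp only [shiftA_tailStr, shiftA_headStr] at hk' ⊢
    obtain ⟨k, rfl, hdk⟩ := descends_unmap hρ hk'
    obtain ⟨htaI, hmta⟩ := htI a ha
    obtain ⟨hkI, hmk⟩ := hdesc a ha k hdk
    by_cases hm : a.headStr = m
    · rw [hm, hmin]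
      exact ⟨fun _ => rho_lt_max hpred hleM hkI hmk,
             fun _ => rho_lt_max hpred hleM htaI hmta⟩
    · have hhIa := hhI a ha
      have hmha : m < a.headStr := lt_of_le_of_ne (hmle _ hhIa) (Ne.symm hm)
      rw [← rho_lt_iff hpred htaI hhIa hmta hmha, ← rho_lt_iff hpred hkI hhIa hmk hmha]
      exact hside a ha k hdk
  · intro a' ha' b' hb' hhead hpos k' k'' hk' hk''
    obtain ⟨a, ha, rfl⟩ := Finset.mem_image.1 ha'
    obtain ⟨b, hb, rfl⟩ := Finset.mem_image.1 hb'
    simp only [shiftA_headStr, shiftA_tailStr] at hhead hk' hk'' ⊢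
    have hh : a.headStr = b.headStr := hρ hhead
    obtain ⟨k, rfl, hdk⟩ := descends_unmap hρ hk'
    obtain ⟨k₂, rfl, hdk₂⟩ := descends_unmap hρ hk''
    obtain ⟨htaI, hmta⟩ := htI a ha
    obtain ⟨htbI, hmtb⟩ := htI b hb
    obtain ⟨hkI, hmk⟩ := hdesc a ha k hdk
    obtain ⟨hk₂I, hmk₂⟩ := hdesc b hb k₂ hdk₂
    have hpos' := hpos
    rw [shiftA_headPos, shiftA_headPos] at hpos'
    by_cases hm : a.headStr = m
    · have hbm : b.headStr = m := hh ▸ hm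
      have hMa : ρ a.headStr = M := by rw [hm, hmin]
      have hMb : ρ b.headStr = M := by rw [hbm, hmin]
      rw [if_pos hMa, if_pos hMb] at hpos'
      have hposba : b.headPos < a.headPos := by linarith
      have hkey := hord b hb a ha hh.symm hposba k₂ k hdk₂ hdk
      have hk2k : k₂ < k := hkey.2 (by rw [hbm]; exact hmtb) (by rw [hm]; exact hmta)
      constructor
      · intro _ _; exact rho_strictMono hpred hk₂I hkI hmk₂ hmk hk2k
      · intro hMlt _
        exact absurd hMlt (not_lt_of_gt (hMa ▸ rho_lt_max hpred hleM htaI hmta))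
    · have hbm : b.headStr ≠ m := by rw [← hh]; exact hm
      have hhIa := hhI a ha
      have hhIb := hhI b hb
      have hmha : m < a.headStr := lt_of_le_of_ne (hmle _ hhIa) (Ne.symm hm)
      have hmhb : m < b.headStr := lt_of_le_of_ne (hmle _ hhIb) (Ne.symm hbm)
      rw [if_neg (hrneM _ hhIa hmha), if_neg (hrneM _ hhIb hmhb)] at hpos'
      have hkey := hord a ha b hb hh hpos' k k₂ hdk hdk₂
      constructor
      · intro hta htb
        exact rho_strictMono hpred hk₂I hkI hmk₂ hmk
          (hkey.1 ((rho_lt_iff hpred htaI hhIa hmta hmha).2 hta)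
                  ((rho_lt_iff hpred htbI hhIb hmtb hmhb).2 htb))
      · intro hta htb
        exact rho_strictMono hpred hkI hk₂I hmk hmk₂
          (hkey.2 ((rho_lt_iff hpred hhIa htaI hmha hmta).2 hta)
                  ((rho_lt_iff hpred hhIb htbI hmhb hmtb).2 htb))

end Planar
section Planar2

variable {n : ℕ} {I : Finset (Fin n)} {ρ : Fin n → Fin n} {m M : Fin n}

lemma planar_backward (hmI : m ∈ I) (hMI : M ∈ I) (hmin : ρ m = M)
    (hout : ∀ s, s ∉ I → ρ s = s)
    (hpred : ∀ s ∈ I, m < s → ρ s ∈ I ∧ ρ s < s ∧ ∀ x ∈ I, x < s → x ≤ ρ s)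
    (hmle : ∀ x ∈ I, m ≤ x) (hleM : ∀ x ∈ I, x ≤ M)
    {S : Finset (GArrow n)}
    (hP : IsPlanarTreeDiagram (I.erase M) M (S.image (shiftA ρ M))) :
    IsPlanarTreeDiagram (I.erase m) m S := by
  have hρ : Function.Injective ρ := rho_injective hMI hmin hout hpred hmle hleM
  obtain ⟨⟨h1', h2', h3', h4', h5'⟩, hroot', hside', hord'⟩ := hP
  have hrneM : ∀ s ∈ I, m < s → ρ s ≠ M :=
    fun s hs hms => ne_of_lt (rho_lt_max hpred hleM hs hms)
  have htE : ∀ a ∈ S, a.tailStr ∈ I.erase m := by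
    intro a ha
    have h := h3' _ (Finset.mem_image_of_mem _ ha)
    rw [shiftA_tailStr, Finset.mem_erase] at h
    refine Finset.mem_erase.2 ⟨?_, mem_of_rho_mem hout h.2⟩
    rintro rfl; exact h.1 hmin
  have htI : ∀ a ∈ S, a.tailStr ∈ I ∧ m < a.tailStr := by
    intro a ha
    have h := Finset.mem_erase.1 (htE a ha)
    exact ⟨h.2, lt_of_le_of_ne (hmle _ h.2) (Ne.symm h.1)⟩
  have hhI : ∀ a ∈ S, a.headStr ∈ I := by
    intro a ha
    rcases h4' _ (Finset.mem_image_of_mem _ ha) with h | h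
    · rw [shiftA_headStr, Finset.mem_erase] at h
      exact mem_of_rho_mem hout h.2
    · rw [shiftA_headStr] at h
      exact mem_of_rho_mem hout (h ▸ hMI)
  have hdesc : ∀ a ∈ S, ∀ k, Descends S a.tailStr k → k ∈ I ∧ m < k := by
    intro a ha k hk
    rcases descends_cases hk with rfl | ⟨b, hb, rfl⟩
    · exact htI a ha
    · exact htI b hb
  refine ⟨⟨?_, ?_, ?_, ?_, ?_⟩, ?_, ?_, ?_⟩
  · intro a ha hcon
    exact h1' _ (Finset.mem_image_of_mem _ ha)
      (by rw [shiftA_tailStr, shiftA_headStr, hcon])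
  · intro i hi
    have h := Finset.mem_erase.1 hi
    have hmi : m < i := lt_of_le_of_ne (hmle _ h.2) (Ne.symm h.1)
    obtain ⟨a', ⟨ha'S, hat⟩, huniq⟩ := h2' (ρ i)
      (Finset.mem_erase.2 ⟨hrneM _ h.2 hmi, rho_mem hMI hmin hpred hmle h.2⟩)
    obtain ⟨a, ha, rfl⟩ := Finset.mem_image.1 ha'S
    rw [shiftA_tailStr] at hat
    refine ⟨a, ⟨ha, hρ hat⟩, ?_⟩
    rintro b ⟨hb, hbt⟩
    have hba : shiftA ρ M b = shiftA ρ M a := huniq _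
      ⟨Finset.mem_image_of_mem _ hb, by rw [shiftA_tailStr, hbt]⟩
    exact shiftA_injective hρ M hba
  · exact htE
  · intro a ha
    by_cases h : a.headStr = m
    · exact Or.inr h
    · exact Or.inl (Finset.mem_erase.2 ⟨h, hhI a ha⟩)
  · intro a ha b hb heq
    have hmtb := (htI b hb).2
    have htbI := (htI b hb).1
    have h := h5' _ (Finset.mem_image_of_mem _ ha) _ (Finset.mem_image_of_mem _ hb)
      (by rw [shiftA_headStr, shiftA_tailStr, heq])
    rw [shiftA_headPos, shiftA_tailPos, if_neg, if_neg] at h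
    · exact h
    · exact hrneM _ htbI hmtb
    · rw [heq]; exact hrneM _ htbI hmtb
  · intro i hi
    have h := Finset.mem_erase.1 hi
    have hmi : m < i := lt_of_le_of_ne (hmle _ h.2) (Ne.symm h.1)
    have htg := hroot' (ρ i)
      (Finset.mem_erase.2 ⟨hrneM _ h.2 hmi, rho_mem hMI hmin hpred hmle h.2⟩)
    rw [← hmin] at htg
    exact transgen_unmap hρ htg
  · intro a ha k hdk
    obtain ⟨htaI, hmta⟩ := htI a ha
    obtain ⟨hkI, hmk⟩ := hdesc a ha k hdk
    have h := hside' _ (Finset.mem_image_of_mem _ ha) (ρ k)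
      (by rw [shiftA_tailStr]; exact descends_map hdk)
    rw [shiftA_tailStr, shiftA_headStr] at h
    by_cases hm : a.headStr = m
    · rw [hm]
      exact iff_of_false (not_lt.2 (le_of_lt hmta)) (not_lt.2 (le_of_lt hmk))
    · have hhIa := hhI a ha
      have hmha : m < a.headStr := lt_of_le_of_ne (hmle _ hhIa) (Ne.symm hm)
      rw [rho_lt_iff hpred htaI hhIa hmta hmha, rho_lt_iff hpred hkI hhIa hmk hmha]
      exact h
  · intro a ha b hb hh hpos k k₂ hdk hdk₂
    obtain ⟨htaI, hmta⟩ := htI a ha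
    obtain ⟨htbI, hmtb⟩ := htI b hb
    obtain ⟨hkI, hmk⟩ := hdesc a ha k hdk
    obtain ⟨hk₂I, hmk₂⟩ := hdesc b hb k₂ hdk₂
    have hhIa := hhI a ha
    have hhIb := hhI b hb
    by_cases hm : a.headStr = m
    · have hbm : b.headStr = m := hh ▸ hm
      have hMa : ρ a.headStr = M := by rw [hm, hmin]
      have hMb : ρ b.headStr = M := by rw [hbm, hmin]
      constructor
      · intro hta _
        exact absurd hta (by rw [hm]; exact not_lt.2 (le_of_lt hmta))
      · intro _ _
        have hkey := hord' _ (Finset.mem_image_of_mem _ hb) _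
          (Finset.mem_image_of_mem _ ha)
          (by rw [shiftA_headStr, shiftA_headStr, hh])
          (by rw [shiftA_headPos, shiftA_headPos, if_pos hMa, if_pos hMb]; linarith)
          (ρ k₂) (ρ k)
          (by rw [shiftA_tailStr]; exact descends_map hdk₂)
          (by rw [shiftA_tailStr]; exact descends_map hdk)
        have hkk : ρ k < ρ k₂ := by
          refine hkey.1 ?_ ?_
          · rw [shiftA_tailStr, shiftA_headStr, hMb]
            exact rho_lt_max hpred hleM htbI hmtb
          · rw [shiftA_tailStr, shiftA_headStr, hMa]
            exact rho_lt_max hpred hleM htaI hmta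
        exact (rho_lt_iff hpred hkI hk₂I hmk hmk₂).2 hkk
    · have hbm : b.headStr ≠ m := by rw [← hh]; exact hm
      have hmha : m < a.headStr := lt_of_le_of_ne (hmle _ hhIa) (Ne.symm hm)
      have hmhb : m < b.headStr := lt_of_le_of_ne (hmle _ hhIb) (Ne.symm hbm)
      have hkey := hord' _ (Finset.mem_image_of_mem _ ha) _
        (Finset.mem_image_of_mem _ hb)
        (by rw [shiftA_headStr, shiftA_headStr, hh])
        (by rw [shiftA_headPos, shiftA_headPos,
            if_neg (hrneM _ hhIa hmha), if_neg (hrneM _ hhIb hmhb)]; exact hpos)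
        (ρ k) (ρ k₂)
        (by rw [shiftA_tailStr]; exact descends_map hdk)
        (by rw [shiftA_tailStr]; exact descends_map hdk₂)
      simp only [shiftA_tailStr, shiftA_headStr] at hkey
      constructor
      · intro hta htb
        exact (rho_lt_iff hpred hk₂I hkI hmk₂ hmk).2
          (hkey.1 ((rho_lt_iff hpred htaI hhIa hmta hmha).1 hta)
                  ((rho_lt_iff hpred htbI hhIb hmtb hmhb).1 htb))
      · intro hta htb
        exact (rho_lt_iff hpred hkI hk₂I hmk hmk₂).2
          (hkey.2 ((rho_lt_iff hpred hhIa htaI hmha hmta).1 hta)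
                  ((rho_lt_iff hpred hhIb htbI hmhb hmtb).1 htb))

end Planar2
lemma powerset_image_eq {α β : Type*} [DecidableEq α] [DecidableEq β]
    (f : α → β) (s : Finset α) :
    (s.image f).powerset = s.powerset.image (fun t => t.image f) := by
  ext t
  simp only [Finset.mem_powerset, Finset.mem_image]
  constructor
  · intro ht
    refine ⟨s.filter (fun x => f x ∈ t), Finset.filter_subset _ _, ?_⟩
    ext y
    simp only [Finset.mem_image, Finset.mem_filter]
    constructor
    · rintro ⟨x, ⟨_, hfx⟩, rfl⟩; exact hfx
    · intro hy
      obtain ⟨x, hx, rfl⟩ := Finset.mem_image.1 (ht hy)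
      exact ⟨x, ⟨hx, hy⟩, rfl⟩
  · rintro ⟨u, hu, rfl⟩; exact Finset.image_subset_image hu

section Weight

variable {n : ℕ} {I : Finset (Fin n)} {ρ : Fin n → Fin n} {m M : Fin n}

lemma weight_eq (hmI : m ∈ I) (hMI : M ∈ I) (hmin : ρ m = M)
    (hout : ∀ s, s ∉ I → ρ s = s)
    (hpred : ∀ s ∈ I, m < s → ρ s ∈ I ∧ ρ s < s ∧ ∀ x ∈ I, x < s → x ≤ ρ s)
    (hmle : ∀ x ∈ I, m ≤ x) (hleM : ∀ x ∈ I, x ≤ M)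
    {S : Finset (GArrow n)}
    (htails : ∀ a ∈ S, a.tailStr ∈ I.erase m)
    (hheads : ∀ a ∈ S, a.headStr ∈ I) :
    treeSign (S.image (shiftA ρ M)) * ∏ a ∈ S.image (shiftA ρ M), a.sign
      = treeSign S * ∏ a ∈ S, a.sign := by
  have hρ : Function.Injective ρ := rho_injective hMI hmin hout hpred hmle hleM
  have hinjS : ∀ x ∈ S, ∀ y ∈ S, shiftA ρ M x = shiftA ρ M y → x = y :=
    fun x _ y _ h => shiftA_injective hρ M h
  rw [treeSign_eq, treeSign_eq, Finset.prod_image hinjS, Finset.prod_image hinjS,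
    ← Finset.prod_mul_distrib, ← Finset.prod_mul_distrib]
  refine Finset.prod_congr rfl ?_
  intro a ha
  have ht := Finset.mem_erase.1 (htails a ha)
  have hmta : m < a.tailStr := lt_of_le_of_ne (hmle _ ht.2) (Ne.symm ht.1)
  have hMta : ρ a.tailStr ≠ M := ne_of_lt (rho_lt_max hpred hleM ht.2 hmta)
  have hhIa := hheads a ha
  rw [shiftA_sign, shiftA_tailStr, shiftA_headStr]
  by_cases hm : a.headStr = m
  · have hMha : ρ a.headStr = M := by rw [hm, hmin]
    rw [if_pos (Or.inr ⟨hMta, hMha⟩), hMha,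
      if_pos (rho_lt_max hpred hleM ht.2 hmta),
      if_neg (by rw [hm]; exact not_lt.2 (le_of_lt hmta))]
    ring
  · have hmha : m < a.headStr := lt_of_le_of_ne (hmle _ hhIa) (Ne.symm hm)
    have hMha : ρ a.headStr ≠ M := ne_of_lt (rho_lt_max hpred hleM hhIa hmha)
    have hsc : ¬((ρ a.tailStr = M ∧ ρ a.headStr ≠ M) ∨ (ρ a.tailStr ≠ M ∧ ρ a.headStr = M)) := by
      rintro (⟨h, _⟩ | ⟨_, h⟩)
      · exact hMta h
      · exact hMha h
    rw [if_neg hsc]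
    by_cases hlt : a.tailStr < a.headStr
    · have hlt' : ρ a.tailStr < ρ a.headStr := (rho_lt_iff hpred ht.2 hhIa hmta hmha).1 hlt
      rw [if_pos hlt, if_pos hlt']
    · have hlt' : ¬ρ a.tailStr < ρ a.headStr :=
        fun h => hlt ((rho_lt_iff hpred ht.2 hhIa hmta hmha).2 h)
      rw [if_neg hlt, if_neg hlt']

end Weight
/-- **Behavior under a cyclic permutation followed by an orientation
reversal.**  Let `I = {i₁ < … < i_r}` and let `Gσ` be obtained from `G` by the
cyclic permutation `σ = (i₁ i₂ … i_r)` of strings (string `i_k` of `Gσ` is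
string `i_{k+1}` of `G`, string `i_r` of `Gσ` is string `i₁` of `G`, all other
strings unchanged; equivalently the endpoints on string `s` of `G` move to
string `ρ s`, where `ρ` fixes the complement of `I`, sends `min I` to `max I`
and sends every other element of `I` to its predecessor in `I`), followed by
reversing the orientation of string `i_r = max I` of `Gσ`.  Then
`Z_{I∖{i_r}, i_r}(Gσ) = Z_{I∖{i₁}, i₁}(G)`. -/
theorem cyclic_permutation_behavior {n : ℕ} (G Gsig : GaussDiagram n)
    (I : Finset (Fin n)) (hI : I.Nonempty) (ρ : Fin n → Fin n)
    (hout : ∀ s, s ∉ I → ρ s = s)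
    (hmin : ρ (I.min' hI) = I.max' hI)
    (hpred : ∀ s ∈ I, I.min' hI < s →
      ρ s ∈ I ∧ ρ s < s ∧ ∀ x ∈ I, x < s → x ≤ ρ s)
    (harr : Gsig.arrows = G.arrows.image fun a =>
      reverseArrow (I.max' hI)
        (GArrow.mk (ρ a.tailStr) a.tailPos (ρ a.headStr) a.headPos a.sign)) :
    Z (I.erase (I.max' hI)) (I.max' hI) Gsig
      = Z (I.erase (I.min' hI)) (I.min' hI) G := by
  have hmI : I.min' hI ∈ I := I.min'_mem hI
  have hMI : I.max' hI ∈ I := I.max'_mem hI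
  have hmle : ∀ x ∈ I, I.min' hI ≤ x := fun x hx => I.min'_le x hx
  have hleM : ∀ x ∈ I, x ≤ I.max' hI := fun x hx => I.le_max' x hx
  have hρ : Function.Injective ρ := rho_injective hMI hmin hout hpred hmle hleM
  have harr' : Gsig.arrows = G.arrows.image (shiftA ρ (I.max' hI)) := harr
  unfold Z
  rw [harr', powerset_image_eq, Finset.sum_image
    (fun x _ y _ h => Finset.image_injective (shiftA_injective hρ _) h)]
  refine Finset.sum_congr rfl ?_
  intro S _
  by_cases hpl : IsPlanarTreeDiagram (I.erase (I.min' hI)) (I.min' hI) S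
  · rw [if_pos (planar_forward hmI hMI hmin hout hpred hmle hleM hpl), if_pos hpl]
    have htails : ∀ a ∈ S, a.tailStr ∈ I.erase (I.min' hI) := hpl.1.2.2.1
    have hheads : ∀ a ∈ S, a.headStr ∈ I := by
      intro a ha
      rcases hpl.1.2.2.2.1 a ha with h | h
      · exact (Finset.mem_erase.1 h).2
      · rw [h]; exact hmI
    exact weight_eq hmI hMI hmin hout hpred hmle hleM htails hheads
  · rw [if_neg (fun h => hpl (planar_backward hmI hMI hmin hout hpred hmle hleM h)),
      if_neg hpl]
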